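/- Let α : [0,∞) → (0,1) be continuous, let λ > 0, τ ≥ 0, and let n ≥ 1 be an integer. Then lim_{h→0⁺} (1/h) ∑_{r=1}^∞ ((−1)^{n+r}/r!) ∫_{[τ,τ+h]^r} λ^{β_r(s₁,…,s_r)} binom(β_r(s₁,…,s_r), n) ds₁⋯ds_r = (−1)^{n+1} λ^{α(τ)} binom(α(τ), n). -/

import Mathlib

/-! On the cube `[τ, τ + h]^m` the exponent `β_m` lies in `[0, m]`, where `λ^x ≤ max(1, λ)^m` and
`|binom(x, n)| ≤ (m + 1)^n ≤ 2^(mn)`; so the `m`-th term of the series is at most `(K h)^m / m!`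
with `K = max(1, λ) 2^n`. The terms with `m ≥ 2` therefore add up to at most
`exp(K h) - 1 - K h ≤ (K h)^2 = o(h)`, and only the `m = 1` term, the integral of
`λ^α binom(α, n)` over `[τ, τ + h]`, survives division by `h`: by the fundamental theorem of
calculus its average tends to the value at `τ`. -/

open MeasureTheory

/-- Generalized binomial coefficient `binom(x, n) = (∏_{j=0}^{n-1} (x - j)) / n!`. -/
noncomputable def gbinom (x : ℝ) (n : ℕ) : ℝ :=
  (∏ j ∈ Finset.range n, (x - (j : ℝ))) / (n.factorial : ℝ)

/-- `β_r(s₁, …, s_r) = ∑_{j=1}^r α(s_j)`. -/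
noncomputable def betaSum (α : ℝ → ℝ) {r : ℕ} (s : Fin r → ℝ) : ℝ :=
  ∑ j, α (s j)

open Set Filter Topology
open scoped Nat

theorem abs_gbinom_le {x : ℝ} {m : ℕ} (hx : x ∈ Icc 0 (m : ℝ)) (n : ℕ) :
    |gbinom x n| ≤ ((2 : ℝ) ^ n) ^ m := by
  have hfac : (0 : ℝ) < n ! := by positivity
  have hprod : ∏ j ∈ Finset.range n, |x - j| ≤ ∏ j ∈ Finset.range n, ((m + 1) * (j + 1) : ℝ) :=
    Finset.prod_le_prod (fun _ _ => abs_nonneg _) fun j _ => by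
      rw [abs_le]
      constructor <;> nlinarith [hx.1, hx.2, (j.cast_nonneg : (0 : ℝ) ≤ j)]
  rw [Finset.prod_mul_distrib, Finset.prod_const, Finset.card_range] at hprod
  have hfact : ∏ j ∈ Finset.range n, ((j : ℝ) + 1) = n ! := by
    exact_mod_cast Finset.prod_range_add_one_eq_factorial n
  have hm : (m : ℝ) + 1 ≤ 2 ^ m := by exact_mod_cast Nat.lt_two_pow_self
  calc |gbinom x n| = (∏ j ∈ Finset.range n, |x - j|) / n ! := by
        rw [gbinom, abs_div, Finset.abs_prod, abs_of_pos hfac]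
    _ ≤ ((m : ℝ) + 1) ^ n := by rwa [div_le_iff₀ hfac, ← hfact]
    _ ≤ ((2 : ℝ) ^ m) ^ n := by gcongr
    _ = ((2 : ℝ) ^ n) ^ m := by rw [← pow_mul, ← pow_mul, mul_comm]

theorem abs_rpow_mul_gbinom_le {lam x : ℝ} (hlam : 0 < lam) {m : ℕ} (hx : x ∈ Icc 0 (m : ℝ))
    (n : ℕ) : |lam ^ x * gbinom x n| ≤ (max 1 lam * 2 ^ n) ^ m := by
  have hpow : lam ^ x ≤ max 1 lam ^ m :=
    calc lam ^ x ≤ max 1 lam ^ x := Real.rpow_le_rpow hlam.le (le_max_right 1 lam) hx.1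
      _ ≤ max 1 lam ^ (m : ℝ) := Real.rpow_le_rpow_of_exponent_le (le_max_left 1 lam) hx.2
      _ = max 1 lam ^ m := Real.rpow_natCast _ m
  rw [abs_mul, abs_of_pos (Real.rpow_pos_of_pos hlam x), mul_pow]
  exact mul_le_mul hpow (abs_gbinom_le hx n) (abs_nonneg _) (by positivity)

theorem continuous_gbinom (n : ℕ) : Continuous (gbinom · n) :=
  (continuous_finsetProd _ fun _ _ => continuous_id.sub continuous_const).div_const _

theorem betaSum_mem_Icc {α : ℝ → ℝ} {r : ℕ} {s : Fin r → ℝ} (hs : ∀ j, α (s j) ∈ Icc 0 1) :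
    betaSum α s ∈ Icc 0 (r : ℝ) := by
  constructor
  · exact Finset.sum_nonneg fun j _ => (hs j).1
  · simpa [betaSum] using Finset.sum_le_sum fun j (_ : j ∈ Finset.univ) => (hs j).2

theorem norm_setIntegral_cube_le {E : Type*} [NormedAddCommGroup E] [NormedSpace ℝ E] {m : ℕ}
    {f : (Fin m → ℝ) → E} {a h M : ℝ} (hh : 0 ≤ h)
    (hf : ∀ s ∈ univ.pi fun _ => Icc a (a + h), ‖f s‖ ≤ M) :
    ‖∫ s in univ.pi fun _ => Icc a (a + h), f s‖ ≤ M * h ^ m := by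
  have hvol : volume (univ.pi fun _ : Fin m => Icc a (a + h)) = ENNReal.ofReal h ^ m := by
    rw [volume_pi_pi]
    simp [Real.volume_Icc]
  have hfin : volume (univ.pi fun _ : Fin m => Icc a (a + h)) < ⊤ := by
    rw [hvol]; exact ENNReal.pow_lt_top ENNReal.ofReal_lt_top
  convert norm_setIntegral_le_of_norm_le_const hfin hf using 2
  rw [measureReal_def, hvol, ENNReal.toReal_pow, ENNReal.toReal_ofReal hh]

theorem setIntegral_pi_fin_one {E : Type*} [NormedAddCommGroup E] [NormedSpace ℝ E]
    (g : ℝ → E) (s : Set ℝ) :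
    ∫ x : Fin 1 → ℝ in univ.pi fun _ => s, g (x 0) = ∫ y in s, g y := by
  have hset : (univ.pi fun _ : Fin 1 => s) = MeasurableEquiv.funUnique (Fin 1) ℝ ⁻¹' s := by
    ext x
    simp [Unique.forall_iff]
  rw [hset, ← (volume_preserving_funUnique (Fin 1) ℝ).setIntegral_preimage_emb
    (MeasurableEquiv.funUnique (Fin 1) ℝ).measurableEmbedding]
  rfl

theorem norm_setIntegral_cube_rpow_mul_gbinom_le {α : ℝ → ℝ} {lam τ h : ℝ} (hlam : 0 < lam)
    (hh : 0 ≤ h) (hα : ∀ t ∈ Icc τ (τ + h), α t ∈ Icc 0 1) (n m : ℕ) :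
    ‖∫ s : Fin m → ℝ in univ.pi fun _ => Icc τ (τ + h),
        lam ^ betaSum α s * gbinom (betaSum α s) n‖ ≤ (max 1 lam * 2 ^ n * h) ^ m := by
  rw [mul_pow]
  exact norm_setIntegral_cube_le hh fun s hs =>
    abs_rpow_mul_gbinom_le hlam (betaSum_mem_Icc fun j => hα _ (hs j (mem_univ j))) n

theorem summable_of_norm_le_pow_succ_div_factorial {f : ℕ → ℝ} {x : ℝ}
    (hf : ∀ r, ‖f r‖ ≤ x ^ (r + 1) / (r + 1)!) : Summable f :=
  .of_norm_bounded ((summable_nat_add_iff 1).2 (Real.summable_pow_div_factorial x)) hf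

theorem norm_tsum_succ_le_sq {f : ℕ → ℝ} {x : ℝ} (hx : |x| ≤ 1)
    (hf : ∀ r, ‖f r‖ ≤ x ^ (r + 1) / (r + 1)!) : ‖∑' r, f (r + 1)‖ ≤ x ^ 2 := by
  have hexp : HasSum (fun r => x ^ (r + 2) / (r + 2)!) (Real.exp x - 1 - x) := by
    have := (hasSum_nat_add_iff' 2).2 (Real.exp_eq_exp_ℝ ▸ NormedSpace.expSeries_div_hasSum_exp x)
    simpa [Finset.sum_range_succ, sub_sub] using this
  have hnorm : Summable fun r => ‖f (r + 1)‖ :=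
    hexp.summable.of_nonneg_of_le (fun _ => norm_nonneg _) fun r => hf (r + 1)
  calc ‖∑' r, f (r + 1)‖ ≤ ∑' r, ‖f (r + 1)‖ := norm_tsum_le_tsum_norm hnorm
    _ ≤ Real.exp x - 1 - x := hasSum_le (fun r => hf (r + 1)) hnorm.hasSum hexp
    _ ≤ x ^ 2 := (le_abs_self _).trans (Real.abs_exp_sub_one_sub_id_le hx)

theorem tendsto_inv_mul_setIntegral_Icc {g : ℝ → ℝ} {a : ℝ} (hg : ContinuousOn g (Ici a)) :
    Tendsto (fun h => h⁻¹ * ∫ y in Icc a (a + h), g y) (𝓝[>] 0) (𝓝 (g a)) := by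
  have hderiv : HasDerivWithinAt (fun u => ∫ y in a..u, g y) (g a) (Ioi a) a :=
    (intervalIntegral.integral_hasDerivWithinAt_right IntervalIntegrable.refl
      ((hg.mono Ioi_subset_Ici_self).stronglyMeasurableAtFilter_nhdsWithin measurableSet_Ioi a)
      ((hg a self_mem_Ici).mono Ioi_subset_Ici_self)).mono Ioi_subset_Ici_self
  have hshift : Tendsto (a + ·) (𝓝[>] 0) (𝓝[>] a) := by
    simpa only [Tendsto, add_zero] using (map_add_left_nhdsGT (c := a) (a := (0 : ℝ))).le
  refine (((hasDerivWithinAt_iff_tendsto_slope' (lt_irrefl a)).1 hderiv).comp hshift).congr' ?_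
  filter_upwards [self_mem_nhdsWithin] with h (hh : 0 < h)
  simp [slope, intervalIntegral.integral_of_le (by linarith : a ≤ a + h),
    integral_Icc_eq_integral_Ioc]

theorem tendsto_inv_mul_tsum_of_norm_le_pow_div_factorial {term : ℝ → ℕ → ℝ} {K L : ℝ}
    (hterm : ∀ h > 0, ∀ r, ‖term h r‖ ≤ (K * h) ^ (r + 1) / (r + 1)!)
    (hhead : Tendsto (fun h => h⁻¹ * term h 0) (𝓝[>] 0) (𝓝 L)) :
    Tendsto (fun h => h⁻¹ * ∑' r, term h r) (𝓝[>] 0) (𝓝 L) := by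
  have hsmall : ∀ᶠ h in 𝓝[>] (0 : ℝ), 0 < h ∧ |K * h| ≤ 1 := by
    have hK : ∀ᶠ h in 𝓝 (0 : ℝ), |K * h| < 1 :=
      (continuous_abs.comp (continuous_const_mul K)).continuousAt.eventually_lt continuousAt_const
        (by simp)
    filter_upwards [self_mem_nhdsWithin, nhdsWithin_le_nhds hK] with h hh hKh using ⟨hh, hKh.le⟩
  have htail : Tendsto (fun h => h⁻¹ * ∑' r, term h (r + 1)) (𝓝[>] 0) (𝓝 0) := by
    refine squeeze_zero_norm' (a := fun h => K ^ 2 * h) ?_ ?_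
    · filter_upwards [hsmall] with h ⟨hh, hKh⟩
      calc ‖h⁻¹ * ∑' r, term h (r + 1)‖ ≤ h⁻¹ * (K * h) ^ 2 := by
            rw [norm_mul, norm_inv, Real.norm_of_nonneg hh.le]
            gcongr
            exact norm_tsum_succ_le_sq hKh (hterm h hh)
        _ = K ^ 2 * h := by field_simp
    · exact tendsto_nhdsWithin_of_tendsto_nhds
        (by simpa using (continuous_const_mul (K ^ 2)).tendsto 0)
  rw [← add_zero L]
  refine (hhead.add htail).congr' ?_
  filter_upwards [self_mem_nhdsWithin] with h (hh : 0 < h)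
  rw [(summable_of_norm_le_pow_succ_div_factorial (hterm h hh)).tsum_eq_zero_add, mul_add]

theorem stmt_7_general (α : ℝ → ℝ) (hα : ∀ s ∈ Set.Ici (0 : ℝ), α s ∈ Set.Ioo (0 : ℝ) 1)
    (hαc : ContinuousOn α (Set.Ici 0)) (lam : ℝ) (hlam : 0 < lam)
    (τ : ℝ) (hτ : 0 ≤ τ) (n : ℕ) :
    Filter.Tendsto
      (fun h : ℝ => (1 / h) *
        ∑' r : ℕ, ((-1 : ℝ) ^ (n + (r + 1)) / ((r + 1).factorial : ℝ)) *
          ∫ s : Fin (r + 1) → ℝ in Set.univ.pi (fun _ => Set.Icc τ (τ + h)),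
            lam ^ betaSum α s * gbinom (betaSum α s) n)
      (nhdsWithin 0 (Set.Ioi 0))
      (nhds ((-1 : ℝ) ^ (n + 1) * lam ^ α τ * gbinom (α τ) n)) := by
  set G : ℝ → ℝ := fun t => lam ^ α t * gbinom (α t) n
  have hG : ContinuousOn G (Ici τ) := by
    have hατ := hαc.mono (Ici_subset_Ici.2 hτ)
    exact ((Real.continuous_const_rpow hlam.ne').comp_continuousOn hατ).mul
      ((continuous_gbinom n).comp_continuousOn hατ)
  have hβ (s : Fin 1 → ℝ) : betaSum α s = α (s 0) := Fin.sum_univ_one _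
  simp only [one_div, mul_assoc]
  refine tendsto_inv_mul_tsum_of_norm_le_pow_div_factorial (K := max 1 lam * 2 ^ n)
    (fun h hh r => ?_) (((tendsto_inv_mul_setIntegral_Icc hG).const_mul _).congr fun h => ?_)
  · have hα01 (t : ℝ) (ht : t ∈ Icc τ (τ + h)) : α t ∈ Icc 0 1 :=
      Ioo_subset_Icc_self (hα t (hτ.trans ht.1))
    rw [norm_mul, norm_div, norm_pow, norm_neg, norm_one, one_pow, Real.norm_natCast,
      one_div_mul_eq_div]
    gcongr
    exact norm_setIntegral_cube_rpow_mul_gbinom_le hlam hh.le hα01 n (r + 1)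
  · simp only [hβ, zero_add, Nat.factorial_one, Nat.cast_one, div_one]
    rw [setIntegral_pi_fin_one G]
    ring

theorem stmt_7 (α : ℝ → ℝ) (hα : ∀ s ∈ Set.Ici (0 : ℝ), α s ∈ Set.Ioo (0 : ℝ) 1)
    (hαc : ContinuousOn α (Set.Ici 0)) (lam : ℝ) (hlam : 0 < lam)
    (τ : ℝ) (hτ : 0 ≤ τ) (n : ℕ) (hn : 1 ≤ n) :
    Filter.Tendsto
      (fun h : ℝ => (1 / h) *
        ∑' r : ℕ, ((-1 : ℝ) ^ (n + (r + 1)) / ((r + 1).factorial : ℝ)) *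
          ∫ s : Fin (r + 1) → ℝ in Set.univ.pi (fun _ => Set.Icc τ (τ + h)),
            lam ^ betaSum α s * gbinom (betaSum α s) n)
      (nhdsWithin 0 (Set.Ioi 0))
      (nhds ((-1 : ℝ) ^ (n + 1) * lam ^ α τ * gbinom (α τ) n)) :=
  stmt_7_general α hα hαc lam hlam τ hτ n
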